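/- Let f : X → Y be a morphism in C with X and Y semistable of the same slope μ. Then ker f and im f are semistable of slope μ (or zero), and im f is a strict subobject of Y. -/

import Mathlib

open CategoryTheory Limits

universe v u v' u'

variable (C : Type u) [Category.{v} C] [Preadditive C] [HasZeroObject C]
  [HasBinaryBiproducts C]
variable (D : Type u') [Category.{v'} D] [Abelian D]
variable (F : C ⥤ D) [F.Additive] [F.Faithful]
variable (V : Type*) [AddCommGroup V] [LinearOrder V] [IsOrderedAddMonoid V]

/-- The data and axioms of abstract Harder–Narasimhan theory:
an exact structure on `C` (given by its class of short strict exact sequences),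
an exact faithful functor `F : C ⥤ D` inducing bijections between strict
subobjects and subobjects of the image, a rank function on `D` and a degree
function on `C`. -/
structure HNTheory where
  /-- `SSE f g` means `0 ⟶ A ⟶ B ⟶ Z ⟶ 0` is a short strict exact sequence. -/
  SSE : ∀ ⦃A B Z : C⦄, (A ⟶ B) → (B ⟶ Z) → Prop
  sse_comp_zero : ∀ ⦃A B Z : C⦄ (f : A ⟶ B) (g : B ⟶ Z), SSE f g → f ≫ g = 0
  sse_mono : ∀ ⦃A B Z : C⦄ (f : A ⟶ B) (g : B ⟶ Z), SSE f g → Mono f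
  sse_epi : ∀ ⦃A B Z : C⦄ (f : A ⟶ B) (g : B ⟶ Z), SSE f g → Epi g
  sse_isKernel : ∀ ⦃A B Z : C⦄ (f : A ⟶ B) (g : B ⟶ Z) (hfg : SSE f g),
    Nonempty (IsLimit (KernelFork.ofι f (sse_comp_zero f g hfg)))
  sse_isCokernel : ∀ ⦃A B Z : C⦄ (f : A ⟶ B) (g : B ⟶ Z) (hfg : SSE f g),
    Nonempty (IsColimit (CokernelCofork.ofπ g (sse_comp_zero f g hfg)))
  /-- `F` is exact. -/
  F_exact : ∀ ⦃A B Z : C⦄ (f : A ⟶ B) (g : B ⟶ Z) (hfg : SSE f g),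
    (ShortComplex.mk (F.map f) (F.map g)
      (by rw [← F.map_comp, sse_comp_zero f g hfg, F.map_zero])).ShortExact
  /-- `F` induces a bijection between strict subobjects of `X` and subobjects
  of `F(X)`. -/
  strict_sub_bij : ∀ X : C,
    Function.Bijective
      (fun S : {S : Subobject X // ∃ (Z : C) (g : X ⟶ Z), SSE S.arrow g} =>
        imageSubobject (F.map S.1.arrow))
  rk : D → ℕ
  rk_iso : ∀ ⦃X Y : D⦄, (X ≅ Y) → rk X = rk Y
  rk_eq_zero_iff : ∀ X : D, rk X = 0 ↔ IsZero X
  rk_additive : ∀ (S : ShortComplex D), S.ShortExact → rk S.X₂ = rk S.X₁ + rk S.X₃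
  deg : C → V
  deg_iso : ∀ ⦃X Y : C⦄, (X ≅ Y) → deg X = deg Y
  deg_additive : ∀ ⦃A B Z : C⦄ (f : A ⟶ B) (g : B ⟶ Z), SSE f g → deg B = deg A + deg Z
  deg_le_of_FIso : ∀ ⦃X Y : C⦄ (f : X ⟶ Y), IsIso (F.map f) → deg X ≤ deg Y
  deg_eq_iff_of_FIso : ∀ ⦃X Y : C⦄ (f : X ⟶ Y), IsIso (F.map f) → (deg X = deg Y ↔ IsIso f)

namespace HNTheory

variable {C D F V}

/-- The subobject `F(X') ⊆ F(X)` associated to a subobject `X' ⊆ X`. -/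
noncomputable def FSub (_h : HNTheory C D F V) {X : C} (S : Subobject X) :
    Subobject (F.obj X) :=
  imageSubobject (F.map S.arrow)

variable (h : HNTheory C D F V)

/-- The rank of an object of `C` is the rank of its image in `D`. -/
def rkC (X : C) : ℕ := h.rk (F.obj X)

/-- A subobject is strict if it is an admissible (strict) monomorphism,
i.e. fits in a short strict exact sequence. -/
def StrictSub {X : C} (S : Subobject X) : Prop :=
  ∃ (Z : C) (g : X ⟶ Z), h.SSE S.arrow g

/-- `μ(X) ≤ μ(Y)`, in cross-multiplied form `rk(Y) • deg(X) ≤ rk(X) • deg(Y)`. -/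
def muLE (X Y : C) : Prop := h.rkC Y • h.deg X ≤ h.rkC X • h.deg Y

/-- `μ(X) < μ(Y)`, in cross-multiplied form. -/
def muLT (X Y : C) : Prop := h.rkC Y • h.deg X < h.rkC X • h.deg Y

/-- `μ(X) = μ(Y)`, in cross-multiplied form. -/
def muEQ (X Y : C) : Prop := h.rkC Y • h.deg X = h.rkC X • h.deg Y

/-- A nonzero object is semistable if every nonzero proper subobject has
slope at most that of the ambient object. -/
def Semistable (X : C) : Prop :=
  ¬ IsZero X ∧ ∀ S : Subobject X, ¬ IsZero ((S : C)) → S ≠ ⊤ → h.muLE (S : C) X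

/-- A subobject of maximal slope. -/
def MaxSlopeSub {X : C} (S : Subobject X) : Prop :=
  ¬ IsZero ((S : C)) ∧ ∀ T : Subobject X, ¬ IsZero ((T : C)) → h.muLE (T : C) (S : C)

/-- `G` is (a model of) the `i`-th graded piece `c i.succ / c i.castSucc` of a
filtration `c` by strict subobjects. -/
def GrAt {X : C} {N : ℕ} (c : Fin (N + 1) → Subobject X) (i : Fin N) (G : C) : Prop :=
  ∃ (hle : c i.castSucc ≤ c i.succ) (p : ((c i.succ : Subobject X) : C) ⟶ G),
    h.SSE (Subobject.ofLE (c i.castSucc) (c i.succ) hle) p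

/-- `c` is a Harder–Narasimhan filtration. -/
def IsHNFilt {X : C} {N : ℕ} (c : Fin (N + 1) → Subobject X) : Prop :=
  StrictMono c ∧ c 0 = ⊥ ∧ c (Fin.last N) = ⊤ ∧ (∀ i, h.StrictSub (c i)) ∧
  (∀ (i : Fin N) (G : C), h.GrAt c i G → h.Semistable G) ∧
  (∀ (i j : Fin N), i < j → ∀ (Gi Gj : C),
    h.GrAt c i Gi → h.GrAt c j Gj → h.muLT Gj Gi)

end HNTheory

/-!
The strict sequence `0 → K → X → Q → 0` has the see-saw property: `μ(K) ≤ μ(X)`, which holds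
by semistability of `X`, is equivalent to `μ(X) ≤ μ(Q)`. On the other hand `Q ⊆ Y` gives
`μ(Q) ≤ μ(Y) = μ(X)`, so `K`, `X`, `Q`, `Y` all have slope `μ`, and semistability passes to `K`
and `Q` as subobjects of a semistable object of the same slope.

Exactness of `F` identifies `F(Q)` with the image of `F(f)`, so `F(m)` is a monomorphism. The
strict subobject `S ⊆ Y` with `F(S) = F(Q)` receives a map `w : Q ⟶ S` with `F(w)` invertible,
whence `rk Q = rk S` and `deg Q ≤ deg S`; since `μ(S) ≤ μ(Y) = μ(Q)`, the degrees agree and `w`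
is an isomorphism, so `Q = S` is strict.
-/

theorem CategoryTheory.ShortComplex.Exact.mono_of_isColimit_cokernelCofork
    {𝒜 : Type*} [Category 𝒜] [Abelian 𝒜] {A B W Z : 𝒜} {k : A ⟶ B} {f : B ⟶ W} {q : B ⟶ Z}
    {m : Z ⟶ W} {hkf : k ≫ f = 0} (hexact : (ShortComplex.mk k f hkf).Exact)
    {hkq : k ≫ q = 0} (hq : IsColimit (CokernelCofork.ofπ q hkq)) (hqm : q ≫ m = f) :
    Mono m := by
  have hm : m = (hq.coconePointUniqueUpToIso (cokernelIsCokernel k)).hom ≫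
      cokernel.desc k f hkf :=
    Cofork.IsColimit.hom_ext hq <| by
      simpa [hqm] using (hq.fac (CokernelCofork.ofπ f hkf) .one).symm
  have := hexact.mono_cokernelDesc
  rw [hm]
  infer_instance

theorem nsmul_add_le_nsmul_add_iff {M : Type*} [AddCommGroup M] [PartialOrder M]
    [IsOrderedAddMonoid M] (a c : ℕ) (x z : M) :
    (a + c) • x ≤ a • (x + z) ↔ c • (x + z) ≤ (a + c) • z := by
  rw [add_nsmul, add_nsmul, nsmul_add, nsmul_add, add_le_add_iff_left, add_le_add_iff_right]

theorem nsmul_add_eq_nsmul_add_iff {M : Type*} [AddCommGroup M] (a c : ℕ) (x z : M) :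
    (a + c) • x = a • (x + z) ↔ c • (x + z) = (a + c) • z := by
  rw [add_nsmul, add_nsmul, nsmul_add, nsmul_add, add_right_inj, add_left_inj]

namespace HNTheory

variable {C D F V}

set_option linter.unusedSectionVars false

variable (h : HNTheory C D F V)

theorem isZero_of_isZero_map {A : C} (hA : IsZero (F.obj A)) : IsZero A :=
  (IsZero.iff_id_eq_zero _).2 <| F.map_injective <| by
    rw [F.map_id, F.map_zero]
    exact hA.eq_of_src _ _

theorem rkC_pos {A : C} (hA : ¬ IsZero A) : 0 < h.rkC A :=
  Nat.pos_of_ne_zero fun h0 => hA (isZero_of_isZero_map ((h.rk_eq_zero_iff _).1 h0))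

theorem rkC_iso {A B : C} (e : A ≅ B) : h.rkC A = h.rkC B :=
  h.rk_iso (F.mapIso e)

theorem rkC_eq_of_isIso_map {A B : C} (w : A ⟶ B) [IsIso (F.map w)] : h.rkC A = h.rkC B :=
  h.rk_iso (asIso (F.map w))

theorem rkC_additive {A B Z : C} {f : A ⟶ B} {g : B ⟶ Z} (hfg : h.SSE f g) :
    h.rkC B = h.rkC A + h.rkC Z :=
  h.rk_additive _ (h.F_exact f g hfg)

theorem deg_eq_zero_of_isZero {A : C} (hA : IsZero A) : h.deg A = 0 := by
  obtain ⟨⟨S, Z, g, hSg⟩, -⟩ := (h.strict_sub_bij A).2 ⊥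
  have hS : IsZero (S : C) := IsZero.of_mono_eq_zero S.arrow (hA.eq_of_tgt _ _)
  have := h.sse_epi _ _ hSg
  have hZ : IsZero Z := IsZero.of_epi_eq_zero g (hA.eq_of_src _ _)
  simpa [h.deg_iso (hS.iso hA), h.deg_iso (hZ.iso hA)] using h.deg_additive _ _ hSg

theorem muLE_iso_left {A A' B : C} (e : A ≅ A') : h.muLE A B ↔ h.muLE A' B := by
  rw [muLE, muLE, h.deg_iso e, h.rkC_iso e]

theorem muEQ_of_iso {A B : C} (e : A ≅ B) : h.muEQ A B := by
  rw [muEQ, h.deg_iso e, h.rkC_iso e]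

theorem muLE_of_isZero_left {A : C} (hA : IsZero A) (B : C) : h.muLE A B := by
  have hrk : h.rkC A = 0 := (h.rk_eq_zero_iff _).2 (F.map_isZero hA)
  simp [muLE, h.deg_eq_zero_of_isZero hA, hrk]

theorem muEQ_of_muLE_of_muLE {A B : C} (hAB : h.muLE A B) (hBA : h.muLE B A) : h.muEQ A B :=
  le_antisymm hAB hBA

theorem muLE_trans {A B E : C} (hAB : h.muLE A B) (hBE : h.muLE B E) (hB : 0 < h.rkC B) :
    h.muLE A E := by
  refine le_of_nsmul_le_nsmul_right hB.ne' ?_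
  calc h.rkC B • h.rkC E • h.deg A = h.rkC E • h.rkC B • h.deg A := smul_comm _ _ _
    _ ≤ h.rkC E • h.rkC A • h.deg B := nsmul_le_nsmul_right hAB _
    _ = h.rkC A • h.rkC E • h.deg B := smul_comm _ _ _
    _ ≤ h.rkC A • h.rkC B • h.deg E := nsmul_le_nsmul_right hBE _
    _ = h.rkC B • h.rkC A • h.deg E := smul_comm _ _ _

theorem muLE_iff_muLE_of_sse {A B Z : C} {f : A ⟶ B} {g : B ⟶ Z} (hfg : h.SSE f g) :
    h.muLE A B ↔ h.muLE B Z := by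
  rw [muLE, muLE, h.rkC_additive hfg, h.deg_additive f g hfg]
  exact nsmul_add_le_nsmul_add_iff _ _ _ _

theorem muEQ_iff_muEQ_of_sse {A B Z : C} {f : A ⟶ B} {g : B ⟶ Z} (hfg : h.SSE f g) :
    h.muEQ A B ↔ h.muEQ B Z := by
  rw [muEQ, muEQ, h.rkC_additive hfg, h.deg_additive f g hfg]
  exact nsmul_add_eq_nsmul_add_iff _ _ _ _

section

variable {h}

theorem muEQ.le {A B : C} (hAB : h.muEQ A B) : h.muLE A B := le_of_eq hAB

theorem muEQ.ge {A B : C} (hAB : h.muEQ A B) : h.muLE B A := ge_of_eq hAB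

theorem muEQ.symm {A B : C} (hAB : h.muEQ A B) : h.muEQ B A := Eq.symm hAB

theorem StrictSub.mono_map {X : C} {S : Subobject X} (hS : h.StrictSub S) :
    Mono (F.map S.arrow) := by
  obtain ⟨_, _, hSg⟩ := hS
  exact (h.F_exact _ _ hSg).mono_f

theorem Semistable.muLE_of_mono {X A : C} (hX : h.Semistable X) (i : A ⟶ X) [Mono i] :
    h.muLE A X := by
  by_cases hA : IsZero A
  · exact h.muLE_of_isZero_left hA X
  by_cases htop : Subobject.mk i = ⊤
  · have := (Subobject.isIso_iff_mk_eq_top i).2 htop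
    exact (h.muEQ_of_iso (asIso i)).le
  refine (h.muLE_iso_left (Subobject.underlyingIso i)).1 (hX.2 _ (fun hz => hA ?_) htop)
  exact hz.of_iso (Subobject.underlyingIso i).symm

theorem Semistable.of_mono {X A : C} (hX : h.Semistable X) (i : A ⟶ X) [Mono i]
    (hA : ¬ IsZero A) (hAX : h.muEQ A X) : h.Semistable A :=
  ⟨hA, fun T _ _ => h.muLE_trans (hX.muLE_of_mono (T.arrow ≫ i)) hAX.ge (h.rkC_pos hX.1)⟩

end

theorem exists_strictSub_imageSubobject_eq {X : C} (T : Subobject (F.obj X)) :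
    ∃ S : Subobject X, h.StrictSub S ∧ imageSubobject (F.map S.arrow) = T := by
  obtain ⟨⟨S, hS⟩, hST⟩ := (h.strict_sub_bij X).2 T
  exact ⟨S, hS, hST⟩

theorem mono_map_of_sse_of_isKernel {X Y K Q : C} {f : X ⟶ Y} {k : K ⟶ X} {hk : k ≫ f = 0}
    (hker : IsLimit (KernelFork.ofι k hk)) {q : X ⟶ Q} (hq : h.SSE k q) {m : Q ⟶ Y}
    (hqm : q ≫ m = f) : Mono (F.map m) := by
  have hkf : F.map k ≫ F.map f = 0 := by rw [← F.map_comp, hk, F.map_zero]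
  have himage : imageSubobject (F.map k) = kernelSubobject (F.map f) := by
    refine le_antisymm (image_le_kernel _ _ hkf) ?_
    -- `ker F(f)` is the image of a subobject of `X` killed by `f`, hence contained in `K`.
    obtain ⟨S, -, hSf⟩ := h.exists_strictSub_imageSubobject_eq (kernelSubobject (F.map f))
    have hSf' : (imageSubobject (F.map S.arrow)).arrow ≫ F.map f = 0 := by
      rw [hSf]; exact kernelSubobject_arrow_comp _
    have hS : S.arrow ≫ f = 0 := F.map_injective <| by
      rw [F.map_comp, F.map_zero, ← imageSubobject_arrow_comp (F.map S.arrow), Category.assoc,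
        hSf', comp_zero]
    obtain ⟨v, hv⟩ := KernelFork.IsLimit.lift' hker S.arrow hS
    rw [Fork.ι_ofι] at hv
    rw [← hSf, ← hv, F.map_comp]
    exact imageSubobject_comp_le _ _
  have hexact : (ShortComplex.mk _ _ hkf).Exact :=
    (ShortComplex.exact_iff_image_eq_kernel _).2 himage
  exact hexact.mono_of_isColimit_cokernelCofork (h.F_exact k q hq).gIsCokernel
    (by rw [← F.map_comp, hqm])

theorem exists_strictSub_factorization {Q Y : C} (m : Q ⟶ Y) [Mono (F.map m)] :
    ∃ S : Subobject Y, h.StrictSub S ∧ ∃ w : Q ⟶ S, w ≫ S.arrow = m ∧ IsIso (F.map w) := by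
  obtain ⟨S, hS, hSm⟩ := h.exists_strictSub_imageSubobject_eq (imageSubobject (F.map m))
  have := hS.mono_map
  rw [imageSubobject_mono, imageSubobject_mono] at hSm
  obtain ⟨Z, g, hSg⟩ := hS
  have hmg : m ≫ g = 0 := F.map_injective <| by
    rw [F.map_comp, F.map_zero, ← Subobject.ofMkLEMk_comp hSm.ge, Category.assoc,
      ← F.map_comp, h.sse_comp_zero _ _ hSg, F.map_zero, comp_zero]
  obtain ⟨w, hw⟩ := KernelFork.IsLimit.lift' (h.sse_isKernel _ _ hSg).some m hmg
  rw [Fork.ι_ofι] at hw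
  have hFw : F.map w ≫ F.map S.arrow = F.map m := by rw [← F.map_comp, hw]
  refine ⟨S, ⟨Z, g, hSg⟩, w, hw, not_not.1 ?_⟩
  rw [← Subobject.mk_lt_mk_iff_of_comm _ hFw, hSm]
  exact lt_irrefl _

theorem isIso_of_isIso_map_of_muLE {A B : C} (w : A ⟶ B) [IsIso (F.map w)]
    (hBA : h.muLE B A) : IsIso w := by
  by_cases hA : IsZero A
  · have hB : IsZero B := isZero_of_isZero_map ((F.map_isZero hA).of_iso (asIso (F.map w)).symm)
    exact ⟨0, hA.eq_of_src _ _, hB.eq_of_src _ _⟩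
  have hrk := h.rkC_eq_of_isIso_map w
  rw [muLE, hrk] at hBA
  refine (h.deg_eq_iff_of_FIso w inferInstance).1
    (le_antisymm (h.deg_le_of_FIso w inferInstance) ?_)
  exact le_of_nsmul_le_nsmul_right (hrk ▸ h.rkC_pos hA).ne' hBA

end HNTheory

/-- (4.10) If `f : X ⟶ Y` is a morphism with `X`, `Y` semistable of the same
slope `μ`, then the kernel `K` and image `Q` of `f` are semistable of slope
`μ` (when nonzero), and the image is a strict subobject of `Y`. -/
theorem stmt13 (h : HNTheory C D F V) {X Y : C} (f : X ⟶ Y)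
    (hX : h.Semistable X) (hY : h.Semistable Y) (hmu : h.muEQ X Y)
    (K : C) (k : K ⟶ X) (hk : k ≫ f = 0)
    (hker : Nonempty (IsLimit (KernelFork.ofι k hk)))
    (Q : C) (q : X ⟶ Q) (hq : h.SSE k q)
    (m : Q ⟶ Y) [Mono m] (hqm : q ≫ m = f) :
    (¬ IsZero K → h.Semistable K ∧ h.muEQ K X) ∧
    (¬ IsZero Q → h.Semistable Q ∧ h.muEQ Q X) ∧
    h.StrictSub (Subobject.mk m) := by
  have := h.sse_mono k q hq
  have := h.mono_map_of_sse_of_isKernel hker.some hq hqm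
  have hrkX := h.rkC_pos hX.1
  have hrkY := h.rkC_pos hY.1
  have hXQ : h.muLE X Q := (h.muLE_iff_muLE_of_sse hq).1 (hX.muLE_of_mono k)
  have hQY_le : h.muLE Q Y := hY.muLE_of_mono m
  have hQX : h.muEQ Q X := h.muEQ_of_muLE_of_muLE (h.muLE_trans hQY_le hmu.ge hrkY) hXQ
  have hQY : h.muEQ Q Y := h.muEQ_of_muLE_of_muLE hQY_le (h.muLE_trans hmu.ge hXQ hrkX)
  have hKX : h.muEQ K X := (h.muEQ_iff_muEQ_of_sse hq).2 hQX.symm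
  obtain ⟨S, hS, w, hw, _⟩ := h.exists_strictSub_factorization m
  have hSQ : h.muLE S Q :=
    h.muLE_trans (h.muLE_trans (hY.muLE_of_mono S.arrow) hmu.ge hrkY) hXQ hrkX
  have := h.isIso_of_isIso_map_of_muLE w hSQ
  refine ⟨fun hK => ⟨hX.of_mono k hK hKX, hKX⟩, fun hQ => ⟨hY.of_mono m hQ hQY, hQX⟩, ?_⟩
  rwa [Subobject.mk_eq_mk_of_comm m S.arrow (asIso w) hw, Subobject.mk_arrow]
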